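/- With the setup of the NOMA-equals-OMA power allocation, the total strategy sum satisfies the closed form ∑_{n=1}^K ã_n = (2^{R_1} - 1)/(2^{R_1/τ_1} - 1) + ∑_{l=2}^K [(2^{R_l} - 1)/(2^{R_l/τ_l} - 1)] · ∏_{k=1}^{l-1} 2^{R_k}. -/

import Mathlib

/-!
Write `c l = (2^{R_l} - 1)/(2^{R_l/τ_l} - 1)`, `p k = 2^{R_k}` and
`T n = ∑_{l > n} c l ∏_{k=n}^{l-1} p k`, so that `ã n = c n + (1 - 1/p n) T n` and the claim
reads `∑_{m ≥ 1} ã m = c 1 + T 1`. Since `T n = p n (c (n+1) + T (n+1))`, the partial sums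
`S n = c n + T n` satisfy `ã n + S (n+1) = c n + p n S (n+1) = S n`, and the sum telescopes
from `S K = c K = ã K` down to `n = 1`.
-/

open Finset

def weightedTail {α : Type*} [CommSemiring α] (c p : ℕ → α) (K n : ℕ) : α :=
  ∑ l ∈ Icc (n + 1) K, c l * ∏ k ∈ Icc n (l - 1), p k

theorem weightedTail_eq_mul {α : Type*} [CommSemiring α] (c p : ℕ → α) {K n : ℕ}
    (hnK : n < K) :
    weightedTail c p K n = p n * (c (n + 1) + weightedTail c p K (n + 1)) := by
  have hprod : ∀ l ∈ Icc (n + 1) K,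
      c l * ∏ k ∈ Icc n (l - 1), p k = p n * (c l * ∏ k ∈ Icc (n + 1) (l - 1), p k) := by
    intro l hl
    rw [← insert_Icc_add_one_left_eq_Icc (by grind), prod_insert (by simp)]
    ring
  rw [weightedTail, sum_congr rfl hprod, ← mul_sum, ← insert_Icc_add_one_left_eq_Icc hnK,
    sum_insert (by simp), Icc_eq_empty (by omega), prod_empty, mul_one, weightedTail]

theorem sum_Icc_eq_add_weightedTail {F : Type*} [Field F] (c p a : ℕ → F)
    (hp : ∀ k, p k ≠ 0) {n K : ℕ} (hnK : n ≤ K) (haK : a K = c K)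
    (ha : ∀ m, n ≤ m → m < K → a m = c m + (p m - 1) / p m * weightedTail c p K m) :
    ∑ m ∈ Icc n K, a m = c n + weightedTail c p K n := by
  induction hnK using Nat.decreasingInduction with
  | self =>
    rw [Icc_self, sum_singleton, haK, weightedTail, Icc_eq_empty (by omega), sum_empty,
      add_zero]
  | of_succ n hnK ih =>
    rw [← insert_Icc_add_one_left_eq_Icc hnK.le, sum_insert (by simp),
      ih fun m hm hmK => ha m (by omega) hmK, ha n le_rfl hnK, weightedTail_eq_mul c p hnK]
    field_simp [hp n]
    ring

theorem stmt_8 (K : ℕ) (hK : 1 ≤ K) (R τ : ℕ → ℝ)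
    (atil : ℕ → ℝ)
    (hatilK : atil K = ((2 : ℝ) ^ (R K) - 1) / ((2 : ℝ) ^ (R K / τ K) - 1))
    (hatil : ∀ n : ℕ, 1 ≤ n → n < K →
      atil n = ((2 : ℝ) ^ (R n) - 1) / ((2 : ℝ) ^ (R n / τ n) - 1) +
        (((2 : ℝ) ^ (R n) - 1) / (2 : ℝ) ^ (R n)) *
          ∑ l ∈ Finset.Icc (n + 1) K,
            (((2 : ℝ) ^ (R l) - 1) / ((2 : ℝ) ^ (R l / τ l) - 1)) *
              ∏ k ∈ Finset.Icc n (l - 1), (2 : ℝ) ^ (R k)) :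
    ∑ n ∈ Finset.Icc 1 K, atil n =
      ((2 : ℝ) ^ (R 1) - 1) / ((2 : ℝ) ^ (R 1 / τ 1) - 1) +
        ∑ l ∈ Finset.Icc 2 K,
          (((2 : ℝ) ^ (R l) - 1) / ((2 : ℝ) ^ (R l / τ l) - 1)) *
            ∏ k ∈ Finset.Icc 1 (l - 1), (2 : ℝ) ^ (R k) :=
  sum_Icc_eq_add_weightedTail (fun l => (2 ^ R l - 1) / (2 ^ (R l / τ l) - 1))
    (fun k => 2 ^ R k) atil (fun _ => (Real.rpow_pos_of_pos two_pos _).ne') hK hatilK hatil
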